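/- Let K be the simplicial complex shown in Figure 2 of the paper: a triangulated disk consisting of a central triangle {1,2,3} surrounded by the chordless boundary cycle (4, 8, …, l+3, 5, l+4, …, l+n−1, 6, 7), where vertex 1 is joined to 4,7,6,3,2; vertex 2 is joined to 1,3,4,8,…,l+3,5; vertex 3 is joined to 1,2,5,l+4,…,l+n−1,6. For J₁ = {5,6,7}, J₂ = {2, l+4, …, l+n−1}, J₃ = {3,4}, the full subcomplexes K_{J₁∪J₂} and K_{J₂∪J₃} are connected and acyclic (have vanishing reduced simplicial cohomology), while H̃¹(K_{J₁∪J₂∪J₃}) ≅ ℤ, generated by the class of the cochain χ_{{4,7}}. -/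

import Mathlib

/-- An abstract simplicial complex on vertex type `V` (with the empty face included). -/
structure SC (V : Type) where
  faces : Set (Finset V)
  empty_mem : ∅ ∈ faces
  down_closed : ∀ s ∈ faces, ∀ t ⊆ s, t ∈ faces

variable {V : Type}
/-- The sign `(-1)^{number of elements of J smaller than j}`. -/
def eps [LinearOrder V] (J : Finset V) (j : V) : ℤ :=
  (-1) ^ (J.filter (fun a => a < j)).card
section Cochains
variable [LinearOrder V]
attribute [local instance] Classical.propDecidable

/-- The augmented simplicial cochain group of the full subcomplex `K_J`:
`SCoch K J k` is spanned by the characteristic cochains `χ_L` of the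
`(k-1)`-dimensional simplices `L ∈ K_J` (`k = |L|`; the case `k = 0`, `L = ∅`
gives the augmentation `ℤ` in degree `-1`).  So `SCoch K J (p+1)` are the reduced
`p`-cochains of `K_J`. -/
abbrev SCoch (K : SC V) (J : Finset V) (k : ℕ) : Type :=
  {L : Finset V // L ∈ K.faces ∧ L ⊆ J ∧ L.card = k} →₀ ℤ

/-- The characteristic cochain `χ_L` (or `0` if `L` is not a `(k-1)`-simplex of `K_J`). -/
noncomputable def SCoch.mk (K : SC V) (J : Finset V) (k : ℕ) (L : Finset V) : SCoch K J k :=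
  if h : L ∈ K.faces ∧ L ⊆ J ∧ L.card = k then Finsupp.single ⟨L, h⟩ 1 else 0

/-- The simplicial coboundary map of the (augmented) cochain complex of `K_J`. -/
noncomputable def delta (K : SC V) (J : Finset V) (k : ℕ) (x : SCoch K J k) :
    SCoch K J (k + 1) :=
  x.sum fun L c => ∑ j ∈ J \ L.val, (c * eps L.val j) • SCoch.mk K J (k + 1) (insert j L.val)

end Cochains
/-- The 2-simplices of the triangulated disk of Figure 2: the central triangle
`{1,2,3}` surrounded by the boundary cycle `(4, 8, …, l+3, 5, l+4, …, l+n-1, 6, 7)`,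
with vertex `1` joined to `4,7,6,3,2`, vertex `2` joined to `1,3,4,8,…,l+3,5` and
vertex `3` joined to `1,2,5,l+4,…,l+n-1,6`. -/
def Fig2Tri (l n : ℕ) (t : Finset ℕ) : Prop :=
  t = {1, 2, 3} ∨ t = {1, 2, 4} ∨ t = {1, 4, 7} ∨ t = {1, 6, 7} ∨ t = {1, 3, 6} ∨
  t = {2, 4, 8} ∨ (∃ j, 8 ≤ j ∧ j ≤ l + 2 ∧ t = {2, j, j + 1}) ∨ t = {2, 5, l + 3} ∨
  t = {2, 3, 5} ∨ t = {3, 5, l + 4} ∨ (∃ j, l + 4 ≤ j ∧ j ≤ l + n - 2 ∧ t = {3, j, j + 1}) ∨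
  t = {3, 6, l + n - 1}

/-- The simplicial complex of Figure 2 (a triangulated disk on vertices `1, …, l+n-1`). -/
def Fig2 (l n : ℕ) : SC ℕ where
  faces := {s | ∃ t, Fig2Tri l n t ∧ s ⊆ t}
  empty_mem := ⟨{1, 2, 3}, Or.inl rfl, Finset.empty_subset _⟩
  down_closed := by
    rintro s ⟨t, ht, hst⟩ u hus
    exact ⟨t, ht, hus.trans hst⟩

/-!
`K_{J₁∪J₂}` is the path `2 – 5 – (l+4) – ⋯ – (l+n-1) – 6 – 7`, and `K_{J₂∪J₃}` is the cone with
apex `3` over the path `(l+4) – ⋯ – (l+n-1)` with the edges `3 – 2 – 4` attached. Exactness is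
checked degree by degree: a reduced 0-cocycle is constant along edges, hence constant; a 1-cocycle
is the coboundary of the potential obtained by integrating it along a spanning tree, the cocycle
condition on the triangles taking care of the remaining edges; and on the cone a 2-cochain `c` is
`δ b` for `b L = c ({3} ∪ L)`.

`K_{J₁∪J₂∪J₃}` is a fan around `3` together with the cycle `2 – 4 – 7 – 6 – 3 – 2`. Integration
along that cycle kills coboundaries and takes the value `1` on `χ_{4,7}`; a 1-cocycle minus the
corresponding multiple of `χ_{4,7}` is again the coboundary of a potential.
-/

namespace SC

variable {K : SC V} {J : Finset V} {k : ℕ}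

abbrev IsFace (K : SC V) (J : Finset V) (k : ℕ) (L : Finset V) : Prop :=
  L ∈ K.faces ∧ L ⊆ J ∧ L.card = k

lemma IsFace.mono {L M : Finset V} {m : ℕ} (hL : K.IsFace J k L) (hML : M ⊆ L)
    (hM : M.card = m) : K.IsFace J m M :=
  ⟨K.down_closed L hL.1 M hML, hML.trans hL.2.1, hM⟩

lemma IsFace.erase [DecidableEq V] {M : Finset V} (hM : K.IsFace J (k + 1) M) {j : V}
    (hj : j ∈ M) : K.IsFace J k (M.erase j) :=
  hM.mono (Finset.erase_subset j M) (by rw [Finset.card_erase_of_mem hj, hM.2.2]; rfl)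

instance : Finite {L // K.IsFace J k L} :=
  Finite.of_injective (fun L => (⟨L.1, Finset.mem_powerset.2 L.2.2.1⟩ : J.powerset))
    fun _ _ h => Subtype.ext (congrArg Subtype.val h :)

def IsAcyclicOn [LinearOrder V] (K : SC V) (J : Finset V) : Prop :=
  (∀ k : ℕ, ∀ c : SCoch K J (k + 1), delta K J (k + 1) c = 0 →
      ∃ b : SCoch K J k, delta K J k b = c) ∧
    ∀ c : SCoch K J 0, delta K J 0 c = 0 → c = 0

end SC

namespace SCoch

open SC

variable {K : SC V} {J : Finset V} {k : ℕ}

open Classical in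
noncomputable def eval (L : Finset V) : SCoch K J k →ₗ[ℤ] ℤ :=
  if h : K.IsFace J k L then Finsupp.lapply ⟨L, h⟩ else 0

lemma eval_of_isFace {L : Finset V} (h : K.IsFace J k L) (x : SCoch K J k) :
    eval L x = x ⟨L, h⟩ := by
  rw [eval, dif_pos h]
  rfl

lemma eval_of_not_isFace {L : Finset V} (h : ¬ K.IsFace J k L) (x : SCoch K J k) :
    eval L x = 0 := by
  rw [eval, dif_neg h]
  rfl

lemma ext_eval {x y : SCoch K J k} (h : ∀ L, K.IsFace J k L → eval L x = eval L y) :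
    x = y :=
  Finsupp.ext fun L => by simpa only [eval_of_isFace L.2] using h L.1 L.2

lemma eq_zero_of_forall_not_isFace (h : ∀ L, ¬ K.IsFace J k L) (x : SCoch K J k) : x = 0 :=
  ext_eval fun L hL => absurd hL (h L)

lemma eval_mk [DecidableEq V] {L M : Finset V} (hM : K.IsFace J k M) :
    eval M (SCoch.mk K J k L) = if L = M then 1 else 0 := by
  by_cases hL : K.IsFace J k L
  · simp [SCoch.mk, hL, eval_of_isFace hM, Finsupp.single_apply, Subtype.ext_iff]
  · rw [SCoch.mk, dif_neg hL, map_zero, if_neg]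
    rintro rfl
    exact hL hM

noncomputable def ofFun (g : Finset V → ℤ) : SCoch K J k :=
  Finsupp.equivFunOnFinite.symm fun L => g L.1

lemma eval_ofFun (g : Finset V → ℤ) {L : Finset V} (hL : K.IsFace J k L) :
    eval L (ofFun g : SCoch K J k) = g L := by
  simp [eval_of_isFace hL, ofFun]

end SCoch

lemma Finset.exists_lt_eq_pair_of_card_eq_two [LinearOrder V] {s : Finset V}
    (h : s.card = 2) : ∃ u w, u < w ∧ s = {u, w} := by
  obtain ⟨x, y, hxy, rfl⟩ := Finset.card_eq_two.1 h
  rcases hxy.lt_or_gt with hlt | hlt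
  · exact ⟨x, y, hlt, rfl⟩
  · exact ⟨y, x, hlt, Finset.pair_comm x y⟩

section Coboundary

open SC SCoch

variable [LinearOrder V] {K : SC V} {J : Finset V}

/-- `delta` is defined with classical decidable equality; this is the same sum with the
instance at hand. -/
lemma delta_eq_sum (k : ℕ) (x : SCoch K J k) :
    delta K J k x = x.sum fun L c =>
      ∑ j ∈ J \ L.1, (c * eps L.1 j) • SCoch.mk K J (k + 1) (insert j L.1) := by
  rw [delta]
  congr!

lemma delta_zero (k : ℕ) : delta K J k 0 = 0 :=
  Finsupp.sum_zero_index

lemma delta_add (k : ℕ) (x y : SCoch K J k) :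
    delta K J k (x + y) = delta K J k x + delta K J k y :=
  Finsupp.sum_add_index' (fun _ => by simp) fun _ _ _ => by
    simp only [add_mul, add_smul, Finset.sum_add_distrib]

lemma eval_delta (k : ℕ) (x : SCoch K J k) {M : Finset V} (hM : K.IsFace J (k + 1) M) :
    eval M (delta K J k x) = ∑ j ∈ M, eps (M.erase j) j * eval (M.erase j) x := by
  induction x using Finsupp.induction_linear with
  | zero => simp [delta_zero]
  | add x y hx hy => simp [delta_add, hx, hy, mul_add, Finset.sum_add_distrib]
  | single p c =>
    have hfilter : (J \ p.1).filter (fun j => insert j p.1 = M)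
        = M.filter (fun j => p.1 = M.erase j) := by
      ext j
      simp only [Finset.mem_filter, Finset.mem_sdiff]
      constructor
      · rintro ⟨⟨-, hjp⟩, h⟩
        have hjM : j ∈ M := h ▸ Finset.mem_insert_self j p.1
        exact ⟨hjM, ((Finset.erase_eq_iff_eq_insert hjM hjp).2 h.symm).symm⟩
      · rintro ⟨hjM, h⟩
        have hjp : j ∉ p.1 := h ▸ Finset.notMem_erase j M
        exact ⟨⟨hM.2.1 hjM, hjp⟩, ((Finset.erase_eq_iff_eq_insert hjM hjp).1 h.symm).symm⟩
    rw [delta_eq_sum, Finsupp.sum_single_index (by simp), map_sum]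
    calc ∑ j ∈ J \ p.1, eval M ((c * eps p.1 j) • SCoch.mk K J (k + 1) (insert j p.1))
        = ∑ j ∈ (J \ p.1).filter (fun j => insert j p.1 = M), c * eps p.1 j := by
          rw [Finset.sum_filter]
          refine Finset.sum_congr rfl fun j _ => ?_
          rw [map_zsmul, eval_mk hM, smul_eq_mul, mul_ite, mul_one, mul_zero]
      _ = ∑ j ∈ M, eps (M.erase j) j * eval (M.erase j) (Finsupp.single p c) := by
          rw [hfilter, Finset.sum_filter]
          refine Finset.sum_congr rfl fun j hj => ?_
          rw [eval_of_isFace (hM.erase hj), Finsupp.single_apply]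
          split_ifs with h h' h'
          · rw [h, mul_comm]
          · exact absurd (Subtype.ext h) h'
          · exact absurd (congrArg Subtype.val h') h
          · rw [mul_zero]

lemma eval_delta_zero (x : SCoch K J 0) {v : V} (hv : K.IsFace J 1 {v}) :
    eval {v} (delta K J 0 x) = eval ∅ x := by
  simp [eval_delta 0 x hv, eps]

lemma eval_delta_one (x : SCoch K J 1) {u w : V} (huw : u < w) (h : K.IsFace J 2 {u, w}) :
    eval {u, w} (delta K J 1 x) = eval {w} x - eval {u} x := by
  rw [eval_delta 1 x h, Finset.sum_pair huw.ne]
  simp [eps, Finset.filter_singleton, huw, huw.ne, not_lt.2 huw.le, Finset.erase_insert_of_ne]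
  ring

lemma eval_delta_two (x : SCoch K J 2) {a b c : V} (hab : a < b) (hbc : b < c)
    (h : K.IsFace J 3 {a, b, c}) :
    eval {a, b, c} (delta K J 2 x) = eval {b, c} x - eval {a, c} x + eval {a, b} x := by
  have hac := hab.trans hbc
  rw [eval_delta 2 x h, Finset.sum_insert (by simp [hab.ne, hac.ne]), Finset.sum_pair hbc.ne]
  simp [eps, Finset.filter_insert, Finset.filter_singleton, hab, hbc, hac, hab.ne, hbc.ne, hac.ne,
    not_lt.2 hab.le, not_lt.2 hbc.le, not_lt.2 hac.le, Finset.erase_insert_of_ne]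
  ring

lemma eq_zero_of_delta_zero_eq_zero {v : V} (hv : K.IsFace J 1 {v}) {x : SCoch K J 0}
    (hx : delta K J 0 x = 0) : x = 0 :=
  ext_eval fun L hL => by
    obtain rfl := Finset.card_eq_zero.1 hL.2.2
    rw [← eval_delta_zero x hv, hx, map_zero, map_zero]

lemma eval_singleton_eq_of_delta_eq_zero {x : SCoch K J 1} (hx : delta K J 1 x = 0) {u w : V}
    (huw : u < w) (h : K.IsFace J 2 {u, w}) : eval {w} x = eval {u} x := by
  have := eval_delta_one x huw h
  rw [hx, map_zero] at this
  omega

lemma eval_pair_eq_of_delta_eq_zero {x : SCoch K J 2} (hx : delta K J 2 x = 0) {a b c : V}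
    (hab : a < b) (hbc : b < c) (h : K.IsFace J 3 {a, b, c}) :
    eval {a, c} x = eval {a, b} x + eval {b, c} x := by
  have := eval_delta_two x hab hbc h
  rw [hx, map_zero] at this
  omega

lemma exists_delta_zero_eq_of_eval_singleton_eq {x : SCoch K J 1} (a : ℤ)
    (h : ∀ v, K.IsFace J 1 {v} → eval {v} x = a) : ∃ b, delta K J 0 b = x :=
  ⟨ofFun fun _ => a, ext_eval fun L hL => by
    obtain ⟨v, rfl⟩ := Finset.card_eq_one.1 hL.2.2
    rw [eval_delta_zero _ hL, eval_ofFun _ ⟨K.empty_mem, Finset.empty_subset J, Finset.card_empty⟩,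
      h v hL]⟩

lemma exists_delta_one_eq_of_potential {x : SCoch K J 2} (f : V → ℤ)
    (h : ∀ u w, u < w → K.IsFace J 2 {u, w} → eval {u, w} x = f w - f u) :
    ∃ b, delta K J 1 b = x :=
  ⟨ofFun fun L => ∑ v ∈ L, f v, ext_eval fun L hL => by
    obtain ⟨u, w, huw, rfl⟩ := Finset.exists_lt_eq_pair_of_card_eq_two hL.2.2
    rw [eval_delta_one _ huw hL, eval_ofFun _ (hL.mono (by simp) (Finset.card_singleton w)),
      eval_ofFun _ (hL.mono (by simp) (Finset.card_singleton u)), h u w huw hL,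
      Finset.sum_singleton, Finset.sum_singleton]⟩

lemma exists_delta_eq_of_forall_not_isFace {k : ℕ} (h : ∀ L, ¬ K.IsFace J (k + 1) L)
    (x : SCoch K J (k + 1)) : ∃ b, delta K J k b = x :=
  ⟨0, by rw [delta_zero, eq_zero_of_forall_not_isFace h x]⟩

lemma delta_mk_eq_zero {k : ℕ} {L : Finset V}
    (h : ∀ M, K.IsFace J (k + 1) M → ¬ L ⊆ M) : delta K J k (SCoch.mk K J k L) = 0 :=
  ext_eval fun M hM => by
    rw [eval_delta k _ hM, map_zero]
    refine Finset.sum_eq_zero fun j hj => ?_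
    rw [eval_mk (hM.erase hj), if_neg, mul_zero]
    rintro rfl
    exact h M hM (Finset.erase_subset j M)

end Coboundary

namespace Fig2

open SC SCoch

variable {l n : ℕ}

def J12 (l n : ℕ) : Finset ℕ := {5, 6, 7} ∪ insert 2 (Finset.Icc (l + 4) (l + n - 1))

def J23 (l n : ℕ) : Finset ℕ := insert 2 (Finset.Icc (l + 4) (l + n - 1)) ∪ {3, 4}

def J123 (l n : ℕ) : Finset ℕ := J12 l n ∪ {3, 4}

lemma mem_J12 {v : ℕ} :
    v ∈ J12 l n ↔ v = 5 ∨ v = 6 ∨ v = 7 ∨ v = 2 ∨ l + 4 ≤ v ∧ v ≤ l + n - 1 := by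
  simp only [J12, Finset.mem_union, Finset.mem_insert, Finset.mem_singleton, Finset.mem_Icc]
  tauto

lemma mem_J23 {v : ℕ} : v ∈ J23 l n ↔ v = 2 ∨ l + 4 ≤ v ∧ v ≤ l + n - 1 ∨ v = 3 ∨ v = 4 := by
  simp only [J23, Finset.mem_union, Finset.mem_insert, Finset.mem_singleton, Finset.mem_Icc]
  tauto

lemma mem_J123 {v : ℕ} : v ∈ J123 l n ↔ v ∈ J12 l n ∨ v = 3 ∨ v = 4 := by
  simp only [J123, Finset.mem_union, Finset.mem_insert, Finset.mem_singleton]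

lemma fig2Tri_three_succ {j : ℕ} (hj : l + 4 ≤ j) (hj' : j ≤ l + n - 2) :
    Fig2Tri l n {3, j, j + 1} :=
  .inr <| .inr <| .inr <| .inr <| .inr <| .inr <| .inr <| .inr <| .inr <| .inr <|
    .inl ⟨j, hj, hj', rfl⟩

lemma card_le_three_of_fig2Tri {t : Finset ℕ} (ht : Fig2Tri l n t) : t.card ≤ 3 := by
  unfold Fig2Tri at ht
  rcases ht with rfl | rfl | rfl | rfl | rfl | rfl | ⟨j, -, -, rfl⟩ | rfl | rfl | rfl |
    ⟨j, -, -, rfl⟩ | rfl <;> exact Finset.card_le_three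

lemma card_le_three {L : Finset ℕ} (hL : L ∈ (Fig2 l n).faces) : L.card ≤ 3 := by
  obtain ⟨t, ht, hLt⟩ := hL
  exact (Finset.card_le_card hLt).trans (card_le_three_of_fig2Tri ht)

lemma fig2Tri_of_isFace {J L : Finset ℕ} (h : (Fig2 l n).IsFace J 3 L) : Fig2Tri l n L := by
  obtain ⟨⟨t, ht, hLt⟩, -, hL⟩ := h
  rwa [Finset.eq_of_subset_of_card_le hLt (hL ▸ card_le_three_of_fig2Tri ht)]

lemma not_isFace_of_three_lt {J L : Finset ℕ} {k : ℕ} (hk : 3 < k) :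
    ¬ (Fig2 l n).IsFace J k L := by
  rintro ⟨hL, -, rfl⟩
  exact hk.not_ge (card_le_three hL)

lemma isFace_pair {J t : Finset ℕ} (ht : Fig2Tri l n t) {u w : ℕ} (huw : u < w)
    (h : u ∈ t ∧ w ∈ t ∧ u ∈ J ∧ w ∈ J) : (Fig2 l n).IsFace J 2 {u, w} :=
  ⟨⟨t, ht, by simp [Finset.insert_subset_iff, h.1, h.2.1]⟩,
    by simp [Finset.insert_subset_iff, h.2.2.1, h.2.2.2], Finset.card_pair huw.ne⟩

lemma isFace_singleton_two {J : Finset ℕ} (hJ : 2 ∈ J) : (Fig2 l n).IsFace J 1 {2} :=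
  ⟨⟨{1, 2, 3}, by simp [Fig2Tri], by simp⟩, by simpa using hJ, rfl⟩

lemma isFace_triple {J : Finset ℕ} {a b c : ℕ} (ht : Fig2Tri l n {a, b, c}) (hab : a < b)
    (hbc : b < c) (h : a ∈ J ∧ b ∈ J ∧ c ∈ J) : (Fig2 l n).IsFace J 3 {a, b, c} :=
  ⟨⟨_, ht, subset_rfl⟩, by simp [Finset.insert_subset_iff, h.1, h.2.1, h.2.2],
    Finset.card_eq_three.2 ⟨a, b, c, hab.ne, (hab.trans hbc).ne, hbc.ne, rfl⟩⟩

section J12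

lemma pair_cases_of_isFace_J12 (hl : 5 ≤ l) (hn : 5 ≤ n) {u w : ℕ} (huw : u < w)
    (h : (Fig2 l n).IsFace (J12 l n) 2 {u, w}) :
    u = 2 ∧ w = 5 ∨ u = 5 ∧ w = l + 4 ∨ (l + 4 ≤ u ∧ w = u + 1 ∧ w ≤ l + n - 1) ∨
      u = 6 ∧ w = l + n - 1 ∨ u = 6 ∧ w = 7 := by
  obtain ⟨⟨t, ht, hsub⟩, hJ, -⟩ := h
  unfold Fig2Tri at ht
  rcases ht with rfl | rfl | rfl | rfl | rfl | rfl | ⟨j, hj, hj', rfl⟩ | rfl | rfl | rfl |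
    ⟨j, hj, hj', rfl⟩ | rfl <;>
  simp only [Finset.insert_subset_iff, Finset.singleton_subset_iff, Finset.mem_insert,
    Finset.mem_singleton] at hsub <;>
  obtain ⟨(rfl | rfl | rfl), (rfl | rfl | rfl)⟩ := hsub <;>
  simp only [Finset.insert_subset_iff, Finset.singleton_subset_iff, mem_J12] at hJ <;>
  first | (exfalso; omega) | omega

lemma not_isFace_J12_three (hl : 5 ≤ l) {L : Finset ℕ} : ¬ (Fig2 l n).IsFace (J12 l n) 3 L := by
  intro h
  have hJ := h.2.1
  have ht := fig2Tri_of_isFace h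
  unfold Fig2Tri at ht
  rcases ht with rfl | rfl | rfl | rfl | rfl | rfl | ⟨j, hj, hj', rfl⟩ | rfl | rfl | rfl |
    ⟨j, hj, hj', rfl⟩ | rfl <;>
  simp only [Finset.insert_subset_iff, Finset.singleton_subset_iff, mem_J12] at hJ <;> omega

lemma eval_singleton_eq_J12 (hl : 5 ≤ l) (hn : 5 ≤ n) {x : SCoch (Fig2 l n) (J12 l n) 1}
    (hx : delta _ _ 1 x = 0) {v : ℕ} (hv : v ∈ J12 l n) : eval {v} x = eval {2} x := by
  have step : ∀ {t : Finset ℕ} {u w : ℕ}, Fig2Tri l n t → u < w →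
      u ∈ t ∧ w ∈ t ∧ u ∈ J12 l n ∧ w ∈ J12 l n → eval {w} x = eval {u} x :=
    fun ht huw h => eval_singleton_eq_of_delta_eq_zero hx huw (isFace_pair ht huw h)
  have h5 : eval {5} x = eval {2} x :=
    step (t := {2, 3, 5}) (by simp [Fig2Tri]) (by norm_num) (by simp [mem_J12])
  have hpath : ∀ j, l + 4 ≤ j → j ≤ l + n - 1 → eval {j} x = eval {2} x := by
    intro j hj
    induction j, hj using Nat.le_induction with
    | base =>
      intro _
      rw [← h5]
      exact step (t := {3, 5, l + 4}) (by simp [Fig2Tri]) (by omega)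
        (by simp [mem_J12]; omega)
    | succ j hj ih =>
      intro hj'
      rw [← ih (by omega)]
      exact step (fig2Tri_three_succ hj (by omega)) (by omega) (by simp [mem_J12]; omega)
  have h6 : eval {6} x = eval {2} x := by
    rw [← hpath (l + n - 1) (by omega) le_rfl]
    exact (step (t := {3, 6, l + n - 1}) (by simp [Fig2Tri]) (by omega)
      (by simp [mem_J12]; omega)).symm
  have h7 : eval {7} x = eval {2} x := by
    rw [← h6]
    exact step (t := {1, 6, 7}) (by simp [Fig2Tri]) (by norm_num) (by simp [mem_J12])
  rw [mem_J12] at hv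
  rcases hv with rfl | rfl | rfl | rfl | ⟨hv, hv'⟩
  exacts [h5, h6, h7, rfl, hpath v hv hv']

-- Integration along the path `2 – 5 – (l+4) – ⋯ – (l+n-1) – 6 – 7`, starting from `2`.
noncomputable def pathSum (l : ℕ) (E : Finset ℕ → ℤ) (v : ℕ) : ℤ :=
  E {2, 5} + E {5, l + 4} + ∑ i ∈ Finset.Ico (l + 4) v, E {i, i + 1}

noncomputable def potentialJ12 (l n : ℕ) (E : Finset ℕ → ℤ) (v : ℕ) : ℤ :=
  if v = 2 then 0
  else if v = 5 then E {2, 5}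
  else if v = 6 then pathSum l E (l + n - 1) - E {6, l + n - 1}
  else if v = 7 then pathSum l E (l + n - 1) - E {6, l + n - 1} + E {6, 7}
  else pathSum l E v

lemma potentialJ12_of_le (hl : 5 ≤ l) (E : Finset ℕ → ℤ) {v : ℕ} (hv : l + 4 ≤ v) :
    potentialJ12 l n E v = pathSum l E v := by
  rw [potentialJ12, if_neg (by omega), if_neg (by omega), if_neg (by omega), if_neg (by omega)]

lemma exists_delta_one_eq_J12 (hl : 5 ≤ l) (hn : 5 ≤ n) (x : SCoch (Fig2 l n) (J12 l n) 2) :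
    ∃ b, delta _ _ 1 b = x := by
  refine exists_delta_one_eq_of_potential (potentialJ12 l n fun L => eval L x) fun u w huw h => ?_
  rcases pair_cases_of_isFace_J12 hl hn huw h with
    ⟨rfl, rfl⟩ | ⟨rfl, rfl⟩ | ⟨hu, rfl, -⟩ | ⟨rfl, rfl⟩ | ⟨rfl, rfl⟩
  · simp [potentialJ12]
  · rw [potentialJ12_of_le hl _ le_rfl]
    simp [potentialJ12, pathSum]
  · rw [potentialJ12_of_le hl _ hu, potentialJ12_of_le hl _ (by omega), pathSum, pathSum,
      Finset.sum_Ico_succ_top hu]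
    ring
  · rw [potentialJ12_of_le hl _ (by omega)]
    simp [potentialJ12]
  · simp [potentialJ12]

lemma isAcyclicOn_J12 (hl : 5 ≤ l) (hn : 5 ≤ n) : (Fig2 l n).IsAcyclicOn (J12 l n) := by
  have h2 : 2 ∈ J12 l n := by simp [mem_J12]
  refine ⟨fun k => ?_, fun _ => eq_zero_of_delta_zero_eq_zero (isFace_singleton_two h2)⟩
  match k with
  | 0 => exact fun x hx => exists_delta_zero_eq_of_eval_singleton_eq _ fun v hv =>
      eval_singleton_eq_J12 hl hn hx (hv.2.1 (Finset.mem_singleton_self v))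
  | 1 => exact fun x _ => exists_delta_one_eq_J12 hl hn x
  | 2 => exact fun x _ =>
    exists_delta_eq_of_forall_not_isFace (fun _ => not_isFace_J12_three hl) x
  | k + 3 => exact fun x _ =>
    exists_delta_eq_of_forall_not_isFace (fun _ => not_isFace_of_three_lt (by omega)) x

end J12

section J23

lemma pair_cases_of_isFace_J23 (hl : 5 ≤ l) (hn : 5 ≤ n) {u w : ℕ} (huw : u < w)
    (h : (Fig2 l n).IsFace (J23 l n) 2 {u, w}) :
    u = 2 ∧ w = 3 ∨ u = 2 ∧ w = 4 ∨ (u = 3 ∧ l + 4 ≤ w ∧ w ≤ l + n - 1) ∨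
      (l + 4 ≤ u ∧ w = u + 1 ∧ w ≤ l + n - 1) := by
  obtain ⟨⟨t, ht, hsub⟩, hJ, -⟩ := h
  unfold Fig2Tri at ht
  rcases ht with rfl | rfl | rfl | rfl | rfl | rfl | ⟨j, hj, hj', rfl⟩ | rfl | rfl | rfl |
    ⟨j, hj, hj', rfl⟩ | rfl <;>
  simp only [Finset.insert_subset_iff, Finset.singleton_subset_iff, Finset.mem_insert,
    Finset.mem_singleton] at hsub <;>
  obtain ⟨(rfl | rfl | rfl), (rfl | rfl | rfl)⟩ := hsub <;>
  simp only [Finset.insert_subset_iff, Finset.singleton_subset_iff, mem_J23] at hJ <;>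
  first | (exfalso; omega) | omega

lemma eq_triple_of_isFace_J23 (hl : 5 ≤ l) (hn : 5 ≤ n) {L : Finset ℕ}
    (h : (Fig2 l n).IsFace (J23 l n) 3 L) :
    ∃ j, l + 4 ≤ j ∧ j ≤ l + n - 2 ∧ L = {3, j, j + 1} := by
  have hJ := h.2.1
  have ht := fig2Tri_of_isFace h
  unfold Fig2Tri at ht
  rcases ht with rfl | rfl | rfl | rfl | rfl | rfl | ⟨j, hj, hj', rfl⟩ | rfl | rfl | rfl |
    ⟨j, hj, hj', rfl⟩ | rfl <;>
  simp only [Finset.insert_subset_iff, Finset.singleton_subset_iff, mem_J23] at hJ <;>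
  first | (exfalso; omega) | exact ⟨j, hj, hj', rfl⟩

lemma exists_fig2Tri_three_mem (hn : 5 ≤ n) {j : ℕ} (hj : l + 4 ≤ j) (hj' : j ≤ l + n - 1) :
    ∃ t, Fig2Tri l n t ∧ 3 ∈ t ∧ j ∈ t := by
  rcases hj'.lt_or_eq with hj' | rfl
  · exact ⟨_, fig2Tri_three_succ hj (by omega), by simp, by simp⟩
  · exact ⟨{3, 6, l + n - 1}, by simp [Fig2Tri], by simp, by simp⟩

lemma eval_singleton_eq_J23 (hl : 5 ≤ l) (hn : 5 ≤ n) {x : SCoch (Fig2 l n) (J23 l n) 1}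
    (hx : delta _ _ 1 x = 0) {v : ℕ} (hv : v ∈ J23 l n) : eval {v} x = eval {2} x := by
  have step : ∀ {t : Finset ℕ} {u w : ℕ}, Fig2Tri l n t → u < w →
      u ∈ t ∧ w ∈ t ∧ u ∈ J23 l n ∧ w ∈ J23 l n → eval {w} x = eval {u} x :=
    fun ht huw h => eval_singleton_eq_of_delta_eq_zero hx huw (isFace_pair ht huw h)
  have h3 : eval {3} x = eval {2} x :=
    step (t := {1, 2, 3}) (by simp [Fig2Tri]) (by norm_num) (by simp [mem_J23])
  rw [mem_J23] at hv
  rcases hv with rfl | ⟨hv, hv'⟩ | rfl | rfl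
  · rfl
  · obtain ⟨t, ht, h3t, hvt⟩ := exists_fig2Tri_three_mem hn hv hv'
    rw [← h3]
    exact step ht (by omega) ⟨h3t, hvt, by simp [mem_J23], by simp [mem_J23]; omega⟩
  · exact h3
  · exact step (t := {1, 2, 4}) (by simp [Fig2Tri]) (by norm_num) (by simp [mem_J23])

-- Integration from `2` along the spanning tree with edges `2 – 3`, `2 – 4` and `3 – v`; the
-- remaining edges `j – (j+1)` are checked on the triangles `{3, j, j+1}`.
noncomputable def potentialJ23 (E : Finset ℕ → ℤ) (v : ℕ) : ℤ :=
  if v = 2 then 0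
  else if v = 3 then E {2, 3}
  else if v = 4 then E {2, 4}
  else E {2, 3} + E {3, v}

lemma potentialJ23_of_le (E : Finset ℕ → ℤ) {v : ℕ} (hv : 5 ≤ v) :
    potentialJ23 E v = E {2, 3} + E {3, v} := by
  rw [potentialJ23, if_neg (by omega), if_neg (by omega), if_neg (by omega)]

lemma exists_delta_one_eq_J23 (hl : 5 ≤ l) (hn : 5 ≤ n) {x : SCoch (Fig2 l n) (J23 l n) 2}
    (hx : delta _ _ 2 x = 0) : ∃ b, delta _ _ 1 b = x := by
  refine exists_delta_one_eq_of_potential (potentialJ23 fun L => eval L x) fun u w huw h => ?_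
  rcases pair_cases_of_isFace_J23 hl hn huw h with
    ⟨rfl, rfl⟩ | ⟨rfl, rfl⟩ | ⟨rfl, hw, -⟩ | ⟨hu, rfl, hw⟩
  · simp [potentialJ23]
  · simp [potentialJ23]
  · rw [potentialJ23_of_le _ (by omega)]
    simp [potentialJ23]
  · have := eval_pair_eq_of_delta_eq_zero hx (by omega : 3 < u) (Nat.lt_succ_self u)
      (isFace_triple (fig2Tri_three_succ hu (by omega)) (by omega) (by omega)
        (by simp [mem_J23]; omega))
    rw [potentialJ23_of_le _ (by omega), potentialJ23_of_le _ (by omega), this]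
    ring

lemma exists_delta_two_eq_J23 (hl : 5 ≤ l) (hn : 5 ≤ n) (x : SCoch (Fig2 l n) (J23 l n) 3) :
    ∃ b, delta _ _ 2 b = x := by
  -- every triangle of `K_{J₂∪J₃}` is a cone `{3} ∪ L` over an edge `L` not containing `3`
  refine ⟨ofFun fun L => eval (insert 3 L) x, ext_eval fun L hL => ?_⟩
  obtain ⟨j, hj, hj', rfl⟩ := eq_triple_of_isFace_J23 hl hn hL
  have hface : ∀ {M : Finset ℕ}, M ⊆ {3, j, j + 1} → M.card = 2 →
      (Fig2 l n).IsFace (J23 l n) 2 M := fun hM hc => hL.mono hM hc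
  have hzero : ∀ {M : Finset ℕ}, M.card = 2 → eval M x = 0 := fun hM =>
    eval_of_not_isFace (fun h => by have := h.2.2; omega) x
  rw [eval_delta_two _ (by omega) (by omega) hL,
    eval_ofFun _ (hface (by simp) (Finset.card_pair (by omega))),
    eval_ofFun _ (hface (by simp [Finset.insert_subset_iff]) (Finset.card_pair (by omega))),
    eval_ofFun _ (hface (by simp [Finset.insert_subset_iff]) (Finset.card_pair (by omega))),
    Finset.insert_eq_of_mem (s := {3, j + 1}) (by simp),
    Finset.insert_eq_of_mem (s := {3, j}) (by simp),
    hzero (Finset.card_pair (by omega)), hzero (Finset.card_pair (by omega))]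
  simp

lemma isAcyclicOn_J23 (hl : 5 ≤ l) (hn : 5 ≤ n) : (Fig2 l n).IsAcyclicOn (J23 l n) := by
  have h2 : 2 ∈ J23 l n := by simp [mem_J23]
  refine ⟨fun k => ?_, fun _ => eq_zero_of_delta_zero_eq_zero (isFace_singleton_two h2)⟩
  match k with
  | 0 => exact fun x hx => exists_delta_zero_eq_of_eval_singleton_eq _ fun v hv =>
      eval_singleton_eq_J23 hl hn hx (hv.2.1 (Finset.mem_singleton_self v))
  | 1 => exact fun x hx => exists_delta_one_eq_J23 hl hn hx
  | 2 => exact fun x _ => exists_delta_two_eq_J23 hl hn x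
  | k + 3 => exact fun x _ =>
    exists_delta_eq_of_forall_not_isFace (fun _ => not_isFace_of_three_lt (by omega)) x

end J23

section J123

lemma pair_cases_of_isFace_J123 (hl : 5 ≤ l) (hn : 5 ≤ n) {u w : ℕ} (huw : u < w)
    (h : (Fig2 l n).IsFace (J123 l n) 2 {u, w}) :
    u = 2 ∧ w = 3 ∨ u = 2 ∧ w = 4 ∨ u = 4 ∧ w = 7 ∨ u = 6 ∧ w = 7 ∨ u = 3 ∧ w = 6 ∨
      u = 2 ∧ w = 5 ∨ u = 3 ∧ w = 5 ∨ (u = 3 ∧ l + 4 ≤ w ∧ w ≤ l + n - 1) ∨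
      u = 5 ∧ w = l + 4 ∨ (l + 4 ≤ u ∧ w = u + 1 ∧ w ≤ l + n - 1) ∨ u = 6 ∧ w = l + n - 1 := by
  obtain ⟨⟨t, ht, hsub⟩, hJ, -⟩ := h
  unfold Fig2Tri at ht
  rcases ht with rfl | rfl | rfl | rfl | rfl | rfl | ⟨j, hj, hj', rfl⟩ | rfl | rfl | rfl |
    ⟨j, hj, hj', rfl⟩ | rfl <;>
  simp only [Finset.insert_subset_iff, Finset.singleton_subset_iff, Finset.mem_insert,
    Finset.mem_singleton] at hsub <;>
  obtain ⟨(rfl | rfl | rfl), (rfl | rfl | rfl)⟩ := hsub <;>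
  simp only [Finset.insert_subset_iff, Finset.singleton_subset_iff, mem_J123, mem_J12] at hJ <;>
  first | (exfalso; omega) | (simp <;> omega)

lemma pair_four_seven_not_subset_of_isFace_J123 (hl : 5 ≤ l) {M : Finset ℕ}
    (h : (Fig2 l n).IsFace (J123 l n) 3 M) : ¬ {4, 7} ⊆ M := by
  intro h47
  have hJ := h.2.1
  have ht := fig2Tri_of_isFace h
  unfold Fig2Tri at ht
  rcases ht with rfl | rfl | rfl | rfl | rfl | rfl | ⟨j, hj, hj', rfl⟩ | rfl | rfl | rfl |
    ⟨j, hj, hj', rfl⟩ | rfl <;>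
  simp only [Finset.insert_subset_iff, Finset.singleton_subset_iff, Finset.mem_insert,
    Finset.mem_singleton, mem_J123, mem_J12] at h47 hJ <;>
  omega

lemma delta_mk_four_seven (hl : 5 ≤ l) :
    delta (Fig2 l n) (J123 l n) 2 (SCoch.mk _ _ 2 {4, 7}) = 0 :=
  delta_mk_eq_zero fun _ => pair_four_seven_not_subset_of_isFace_J123 hl

lemma isFace_cycle_J123 :
    (Fig2 l n).IsFace (J123 l n) 2 {2, 4} ∧ (Fig2 l n).IsFace (J123 l n) 2 {4, 7} ∧
      (Fig2 l n).IsFace (J123 l n) 2 {6, 7} ∧ (Fig2 l n).IsFace (J123 l n) 2 {3, 6} ∧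
      (Fig2 l n).IsFace (J123 l n) 2 {2, 3} :=
  ⟨isFace_pair (t := {1, 2, 4}) (by simp [Fig2Tri]) (by norm_num) (by simp [mem_J123, mem_J12]),
    isFace_pair (t := {1, 4, 7}) (by simp [Fig2Tri]) (by norm_num) (by simp [mem_J123, mem_J12]),
    isFace_pair (t := {1, 6, 7}) (by simp [Fig2Tri]) (by norm_num) (by simp [mem_J123, mem_J12]),
    isFace_pair (t := {1, 3, 6}) (by simp [Fig2Tri]) (by norm_num) (by simp [mem_J123, mem_J12]),
    isFace_pair (t := {1, 2, 3}) (by simp [Fig2Tri]) (by norm_num) (by simp [mem_J123, mem_J12])⟩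

/-- Integration of 1-cochains along the cycle `2 → 4 → 7 → 6 → 3 → 2` of `K_{J₁∪J₂∪J₃}`. -/
noncomputable def cycleSum (l n : ℕ) : SCoch (Fig2 l n) (J123 l n) 2 →ₗ[ℤ] ℤ :=
  eval {2, 4} + eval {4, 7} - eval {6, 7} - eval {3, 6} - eval {2, 3}

lemma cycleSum_delta (b : SCoch (Fig2 l n) (J123 l n) 1) : cycleSum l n (delta _ _ 1 b) = 0 := by
  obtain ⟨h24, h47, h67, h36, h23⟩ := isFace_cycle_J123 (l := l) (n := n)
  simp only [cycleSum, LinearMap.sub_apply, LinearMap.add_apply,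
    eval_delta_one b (by norm_num) h24, eval_delta_one b (by norm_num) h47,
    eval_delta_one b (by norm_num) h67, eval_delta_one b (by norm_num) h36,
    eval_delta_one b (by norm_num) h23]
  ring

lemma cycleSum_mk_four_seven : cycleSum l n (SCoch.mk _ _ 2 {4, 7}) = 1 := by
  obtain ⟨h24, h47, h67, h36, h23⟩ := isFace_cycle_J123 (l := l) (n := n)
  simp only [cycleSum, LinearMap.sub_apply, LinearMap.add_apply, eval_mk h24, eval_mk h47,
    eval_mk h67, eval_mk h36, eval_mk h23]
  decide

-- Integration from `2` along the spanning tree with edges `2 – 3`, `2 – 4`, `6 – 7` and `3 – v`.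
-- Every other edge but `4 – 7` lies in a triangle with two tree edges.
noncomputable def potentialJ123 (E : Finset ℕ → ℤ) (v : ℕ) : ℤ :=
  if v = 2 then 0
  else if v = 3 then E {2, 3}
  else if v = 4 then E {2, 4}
  else if v = 7 then E {2, 3} + E {3, 6} + E {6, 7}
  else E {2, 3} + E {3, v}

lemma potentialJ123_eq (E : Finset ℕ → ℤ) {v : ℕ} (h2 : v ≠ 2) (h3 : v ≠ 3) (h4 : v ≠ 4)
    (h7 : v ≠ 7) : potentialJ123 E v = E {2, 3} + E {3, v} := by
  rw [potentialJ123, if_neg h2, if_neg h3, if_neg h4, if_neg h7]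

lemma exists_delta_one_eq_sub_J123 (hl : 5 ≤ l) (hn : 5 ≤ n)
    {x : SCoch (Fig2 l n) (J123 l n) 2} (hx : delta _ _ 2 x = 0) :
    ∃ b, delta _ _ 1 b = x - cycleSum l n x • SCoch.mk _ _ 2 {4, 7} := by
  refine exists_delta_one_eq_of_potential (potentialJ123 fun L => eval L x) fun u w huw h => ?_
  rw [map_sub, map_zsmul, eval_mk h, smul_eq_mul]
  by_cases h47 : u = 4 ∧ w = 7
  · obtain ⟨rfl, rfl⟩ := h47
    simp [potentialJ123, cycleSum]
    ring
  have hne : ({4, 7} : Finset ℕ) ≠ {u, w} := fun e => h47 <| by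
    have hu : u ∈ ({4, 7} : Finset ℕ) := e ▸ Finset.mem_insert_self u {w}
    have hw : w ∈ ({4, 7} : Finset ℕ) := e ▸ Finset.mem_insert_of_mem (Finset.mem_singleton_self w)
    simp only [Finset.mem_insert, Finset.mem_singleton] at hu hw
    omega
  rw [if_neg hne, mul_zero, sub_zero]
  have tri : ∀ {a b c : ℕ}, Fig2Tri l n {a, b, c} → a < b → b < c →
      a ∈ J123 l n ∧ b ∈ J123 l n ∧ c ∈ J123 l n →
      eval {a, c} x = eval {a, b} x + eval {b, c} x :=
    fun ht hab hbc hJ => eval_pair_eq_of_delta_eq_zero hx hab hbc (isFace_triple ht hab hbc hJ)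
  rcases pair_cases_of_isFace_J123 hl hn huw h with ⟨rfl, rfl⟩ | ⟨rfl, rfl⟩ | ⟨rfl, rfl⟩ |
    ⟨rfl, rfl⟩ | ⟨rfl, rfl⟩ | ⟨rfl, rfl⟩ | ⟨rfl, rfl⟩ | ⟨rfl, hw, hw'⟩ | ⟨rfl, rfl⟩ |
    ⟨hu, rfl, hw⟩ | ⟨rfl, rfl⟩
  · simp [potentialJ123]
  · simp [potentialJ123]
  · exact absurd ⟨rfl, rfl⟩ h47
  · simp [potentialJ123]
  · simp [potentialJ123]
  · rw [tri (b := 3) (by simp [Fig2Tri]) (by norm_num) (by norm_num) (by simp [mem_J123, mem_J12])]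
    simp [potentialJ123]
  · simp [potentialJ123]
  · rw [potentialJ123_eq _ (by omega) (by omega) (by omega) (by omega)]
    simp [potentialJ123]
  · rw [potentialJ123_eq _ (by omega) (by omega) (by omega) (by omega),
      tri (a := 3) (b := 5) (by simp [Fig2Tri]) (by norm_num) (by omega)
        (by simp [mem_J123, mem_J12]; omega)]
    simp [potentialJ123]
  · rw [potentialJ123_eq _ (by omega) (by omega) (by omega) (by omega),
      potentialJ123_eq _ (by omega) (by omega) (by omega) (by omega),
      tri (a := 3) (fig2Tri_three_succ hu (by omega)) (by omega) (by omega)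
        (by simp [mem_J123, mem_J12]; omega)]
    ring
  · rw [potentialJ123_eq _ (by omega) (by omega) (by omega) (by omega),
      tri (a := 3) (b := 6) (by simp [Fig2Tri]) (by norm_num) (by omega)
        (by simp [mem_J123, mem_J12]; omega)]
    simp [potentialJ123]

lemma existsUnique_eq_smul_mk_add_delta_J123 (hl : 5 ≤ l) (hn : 5 ≤ n)
    {x : SCoch (Fig2 l n) (J123 l n) 2} (hx : delta _ _ 2 x = 0) :
    ∃! z : ℤ, ∃ b, x = z • SCoch.mk _ _ 2 {4, 7} + delta _ _ 1 b := by
  refine ⟨cycleSum l n x, ?_, ?_⟩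
  · obtain ⟨b, hb⟩ := exists_delta_one_eq_sub_J123 hl hn hx
    exact ⟨b, by rw [hb]; abel⟩
  · rintro z ⟨b, rfl⟩
    rw [map_add, map_zsmul, cycleSum_mk_four_seven, cycleSum_delta, smul_eq_mul, mul_one, add_zero]

end J123

end Fig2

/-- For the complex `K` of Figure 2 and `J₁ = {5,6,7}`, `J₂ = {2, l+4, …, l+n-1}`,
`J₃ = {3,4}`: the full subcomplexes `K_{J₁∪J₂}` and `K_{J₂∪J₃}` are connected and
acyclic (their augmented simplicial cochain complexes are exact), while
`H̃¹(K_{J₁∪J₂∪J₃}) ≅ ℤ`, generated by the class of the cochain `χ_{{4,7}}`. -/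
theorem stmt13 (l n : ℕ) (hl : 5 ≤ l) (hn : 5 ≤ n) :
    let K := Fig2 l n
    let J₁ : Finset ℕ := {5, 6, 7}
    let J₂ : Finset ℕ := insert 2 (Finset.Icc (l + 4) (l + n - 1))
    let J₃ : Finset ℕ := {3, 4}
    ((∀ k : ℕ, ∀ c : SCoch K (J₁ ∪ J₂) (k + 1), delta K (J₁ ∪ J₂) (k + 1) c = 0 →
        ∃ b : SCoch K (J₁ ∪ J₂) k, delta K (J₁ ∪ J₂) k b = c) ∧
      (∀ c : SCoch K (J₁ ∪ J₂) 0, delta K (J₁ ∪ J₂) 0 c = 0 → c = 0)) ∧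
    ((∀ k : ℕ, ∀ c : SCoch K (J₂ ∪ J₃) (k + 1), delta K (J₂ ∪ J₃) (k + 1) c = 0 →
        ∃ b : SCoch K (J₂ ∪ J₃) k, delta K (J₂ ∪ J₃) k b = c) ∧
      (∀ c : SCoch K (J₂ ∪ J₃) 0, delta K (J₂ ∪ J₃) 0 c = 0 → c = 0)) ∧
    (delta K (J₁ ∪ J₂ ∪ J₃) 2 (SCoch.mk K (J₁ ∪ J₂ ∪ J₃) 2 {4, 7}) = 0) ∧
    (∀ c : SCoch K (J₁ ∪ J₂ ∪ J₃) 2, delta K (J₁ ∪ J₂ ∪ J₃) 2 c = 0 →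
      ∃! z : ℤ, ∃ b : SCoch K (J₁ ∪ J₂ ∪ J₃) 1,
        c = z • SCoch.mk K (J₁ ∪ J₂ ∪ J₃) 2 {4, 7} + delta K (J₁ ∪ J₂ ∪ J₃) 1 b) :=
  ⟨Fig2.isAcyclicOn_J12 hl hn, Fig2.isAcyclicOn_J23 hl hn, Fig2.delta_mk_four_seven hl,
    fun _ => Fig2.existsUnique_eq_smul_mk_add_delta_J123 hl hn⟩
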